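/- arXiv:1801.08632 — 5 statements merged into one kernel-verified Lean document; each statement's English description precedes it below -/
import Mathlib

section
/- Assume ⌊(e₁+e₂−1)/p⌋ > ⌊(e₁−1)/p⌋ + ⌊(e₂−1)/p⌋. Then p does not divide the binomial coefficient C(e₂−1, pw−e₁) and p does not divide the binomial coefficient C(e₂−1, pw−e₁+1). -/
/-!
Write `e₁ - 1 = p q₁ + a` and `e₂ - 1 = p q₂ + b` with `a, b < p`. The floor hypothesis says that
adding `e₁ - 1` and `e₂ - 1` (plus one) carries, i.e. `p ≤ a + b + 1`, and `e₁ + e₂ ≢ 1 (mod p)`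
excludes `a + b + 1 = p`, so `p ≤ a + b`. Since `pw = p (q₁ + 1)`, we get `pw - e₁ + 1 = p - a ≤ b`,
so both lower indices are at most `(e₂ - 1) % p`, and Lucas' theorem reduces both binomial
coefficients modulo `p` to binomial coefficients with upper index `b < p`, which are prime to `p`.
-/

theorem Nat.Prime.not_dvd_choose_of_le_mod {p n k : ℕ} (hp : p.Prime) (hk : k ≤ n % p) :
    ¬ p ∣ n.choose k := by
  have : Fact p.Prime := ⟨hp⟩
  have hkp : k < p := hk.trans_lt (Nat.mod_lt _ hp.pos)
  have hlucas : n.choose k ≡ (n % p).choose k [MOD p] := by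
    simpa [Nat.mod_eq_of_lt hkp, Nat.div_eq_of_lt hkp] using
      Choose.choose_modEq_choose_mod_mul_choose_div_nat (n := n) (k := k) (p := p)
  have hsmall : ((n % p).choose k).factorization p = 0 :=
    Nat.factorization_choose_eq_zero_of_lt (Nat.mod_lt _ hp.pos)
  rw [Nat.dvd_iff_mod_eq_zero, hlucas, ← Nat.dvd_iff_mod_eq_zero]
  simpa [hp, Nat.factorization_eq_zero_iff, (Nat.choose_pos hk).ne'] using hsmall

theorem Nat.le_mod_add_mod_of_div_add_div_lt {p x y : ℕ} (hcarry : x / p + y / p < (x + y + 1) / p)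
    (hne : ¬ x + y + 2 ≡ 1 [MOD p]) : p ≤ x % p + y % p := by
  have hsplit : x + y + 1 = p * (x / p + y / p) + (x % p + y % p + 1) := by
    have := Nat.div_add_mod x p
    have := Nat.div_add_mod y p
    rw [Nat.mul_add]
    omega
  rcases Nat.eq_zero_or_pos p with rfl | hp
  · simp at hcarry
  have hcarry_succ : p ≤ x % p + y % p + 1 := by
    by_contra! hlt
    rw [hsplit, Nat.mul_add_div hp, Nat.div_eq_of_lt hlt] at hcarry
    omega
  rcases hcarry_succ.eq_or_lt with hwrap | hlt
  · refine absurd ?_ hne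
    have : x + y + 2 = 1 + p * (x / p + y / p + 1) := by rw [Nat.mul_add_one]; omega
    rw [this, Nat.ModEq, Nat.add_mul_mod_self_left]
  · omega

theorem Nat.isLeast_mul_div_add_one {p e : ℕ} (hp : 0 < p) (he : 0 < e) :
    IsLeast {w | p ∣ w ∧ e ≤ w} (p * ((e - 1) / p + 1)) := by
  refine ⟨⟨dvd_mul_right _ _, ?_⟩, ?_⟩
  · have := Nat.lt_mul_div_succ (e - 1) hp
    omega
  · rintro _ ⟨⟨c, rfl⟩, hle⟩
    have : (e - 1) / p < c := (Nat.div_lt_iff_lt_mul hp).2 (by rw [mul_comm]; omega)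
    exact Nat.mul_le_mul_left p this

theorem stmt3_general (p e₁ e₂ pw : ℕ) (hp : p.Prime)
    (h₁₂ : ¬ e₁ + e₂ ≡ 1 [MOD p])
    (hpw : p ∣ pw ∧ e₁ ≤ pw ∧ ∀ w : ℕ, p ∣ w → e₁ ≤ w → pw ≤ w)
    (hfloor : (e₁ - 1) / p + (e₂ - 1) / p < (e₁ + e₂ - 1) / p) :
    ¬ p ∣ (e₂ - 1).choose (pw - e₁) ∧ ¬ p ∣ (e₂ - 1).choose (pw - e₁ + 1) := by
  obtain ⟨hdvd, hle, hmin⟩ := hpw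
  have he₁ : 0 < e₁ := Nat.pos_of_ne_zero fun h => by simp [h] at hfloor
  have he₂ : 0 < e₂ := Nat.pos_of_ne_zero fun h => by simp [h] at hfloor
  have hpw : pw = p * ((e₁ - 1) / p + 1) :=
    (show IsLeast {w | p ∣ w ∧ e₁ ≤ w} pw from ⟨⟨hdvd, hle⟩, fun w hw => hmin w hw.1 hw.2⟩).unique
      (Nat.isLeast_mul_div_add_one hp.pos he₁)
  have hcarry : p ≤ (e₁ - 1) % p + (e₂ - 1) % p :=
    Nat.le_mod_add_mod_of_div_add_div_lt (by rwa [show e₁ - 1 + (e₂ - 1) + 1 = e₁ + e₂ - 1 by omega])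
      (by rwa [show e₁ - 1 + (e₂ - 1) + 2 = e₁ + e₂ by omega])
  have hgap : pw - e₁ + 1 + (e₁ - 1) % p = p := by
    have := Nat.div_add_mod (e₁ - 1) p
    have := Nat.mod_lt (e₁ - 1) hp.pos
    rw [hpw, Nat.mul_add_one]
    omega
  exact ⟨hp.not_dvd_choose_of_le_mod (by omega), hp.not_dvd_choose_of_le_mod (by omega)⟩

/-- Let `p` be an odd prime, `e₁ ≥ e₂ ≥ 2` integers with `e₁, e₂, e₁+e₂ ≢ 1 (mod p)`, and let
`pw` be the smallest multiple of `p` that is at least `e₁`.  If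
`⌊(e₁+e₂−1)/p⌋ > ⌊(e₁−1)/p⌋ + ⌊(e₂−1)/p⌋`, then `p ∤ C(e₂−1, pw−e₁)` and
`p ∤ C(e₂−1, pw−e₁+1)`. -/
theorem stmt3 (p e₁ e₂ pw : ℕ) (hp : p.Prime) (hodd : Odd p)
    (he₂ : 2 ≤ e₂) (hle : e₂ ≤ e₁)
    (h₁ : ¬ e₁ ≡ 1 [MOD p]) (h₂ : ¬ e₂ ≡ 1 [MOD p]) (h₁₂ : ¬ e₁ + e₂ ≡ 1 [MOD p])
    (hpw : p ∣ pw ∧ e₁ ≤ pw ∧ ∀ w : ℕ, p ∣ w → e₁ ≤ w → pw ≤ w)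
    (hfloor : (e₁ - 1) / p + (e₂ - 1) / p < (e₁ + e₂ - 1) / p) :
    ¬ p ∣ (e₂ - 1).choose (pw - e₁) ∧ ¬ p ∣ (e₂ - 1).choose (pw - e₁ + 1) :=
  stmt3_general p e₁ e₂ pw hp h₁₂ hpw hfloor
end

section
/- Assume ⌊(e₁+e₂−1)/p⌋ > ⌊(e₁−1)/p⌋ + ⌊(e₂−1)/p⌋. Then p does not divide the integer Z := ∑_{k=0}^{pw−e₁} (−1)^{e₂−1−k} · C(e₂−1, k). -/
/-!
Write `e₁ - 1 = p q₁ + r₁` and `e₂ - 1 = p q₂ + r₂` with `0 ≤ r₁, r₂ < p`. The floor inequality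
says `r₁ + r₂ + 1 ≥ p`, and `e₁ + e₂ ≢ 1` rules out equality, so `r₁ + r₂ ≥ p`.
Hence `pw = p (q₁ + 1)` and the sum has `m + 1` terms with `m = p - 1 - r₁ < r₂`.
By Pascal's rule a truncated alternating sum of binomial coefficients collapses: `Z = ± C(e₂ - 2, m)`.
Since `e₂ - 2 ≡ r₂ - 1 (mod p)` with `m ≤ r₂ - 1 < p`, Lucas' theorem gives
`C(e₂ - 2, m) ≡ C(r₂ - 1, m) ≢ 0 (mod p)`.
-/

theorem Nat.mod_add_one_of_not_dvd {n p : ℕ} (h : ¬ p ∣ n + 1) : n % p + 1 = (n + 1) % p := by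
  have hn := Nat.div_add_mod n p
  have hn₁ := Nat.div_add_mod (n + 1) p
  rw [Nat.succ_div_of_not_dvd h] at hn₁
  omega

theorem Nat.le_mod_add_mod_of_div_add_div_lt_s4 {a b p : ℕ} (h : a / p + b / p < (a + b + 1) / p)
    (hdvd : ¬ p ∣ a + b + 1) : p ≤ a % p + b % p := by
  by_contra! hlt
  rw [Nat.succ_div_of_not_dvd hdvd, Nat.add_div_eq_of_add_mod_lt hlt] at h
  exact h.false

theorem Nat.Prime.not_dvd_choose_of_lt_of_le_mod {p n k : ℕ} (hp : p.Prime) (hkp : k < p)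
    (hk : k ≤ n % p) : ¬ p ∣ n.choose k := by
  have := Fact.mk hp
  have hlucas : n.choose k ≡ (n % p).choose k [MOD p] := by
    simpa [Nat.mod_eq_of_lt hkp, Nat.div_eq_of_lt hkp] using
      Choose.choose_modEq_choose_mod_mul_choose_div_nat (n := n) (k := k) (p := p)
  rw [hlucas.dvd_iff dvd_rfl]
  intro hdvd
  exact hp.one_lt.ne' ((hp.coprime_choose_of_lt (Nat.mod_lt n hp.pos) hk).eq_one_of_dvd hdvd)

theorem Int.neg_one_pow_sub_mul_choose (n k : ℕ) :
    (-1 : ℤ) ^ (n - k) * (n.choose k : ℤ) = (-1) ^ n * ((-1) ^ k * (n.choose k : ℤ)) := by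
  rcases le_or_gt k n with hk | hk
  · obtain ⟨j, rfl⟩ := Nat.exists_eq_add_of_le hk
    have hsq : (-1 : ℤ) ^ k * (-1) ^ k = 1 := by rw [← mul_pow]; simp
    rw [Nat.add_sub_cancel_left, pow_add]
    linear_combination (-(-1 : ℤ) ^ j * ((k + j).choose k : ℤ)) * hsq
  · simp [Nat.choose_eq_zero_of_lt hk]

theorem Int.sum_range_neg_one_pow_sub_mul_choose (n m : ℕ) :
    ∑ k ∈ Finset.range (m + 1), (-1 : ℤ) ^ (n + 1 - k) * ((n + 1).choose k : ℤ)
      = (-1) ^ (n + 1 + m) * (n.choose m : ℤ) := by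
  simp_rw [Int.neg_one_pow_sub_mul_choose, ← Finset.mul_sum,
    Int.alternating_sum_range_choose_eq_choose, ← mul_assoc, ← pow_add]

theorem stmt4_general (p e₁ e₂ pw : ℕ) (hp : p.Prime)
    (h₁₂ : ¬ e₁ + e₂ ≡ 1 [MOD p])
    (hpw : p ∣ pw ∧ e₁ ≤ pw ∧ ∀ w : ℕ, p ∣ w → e₁ ≤ w → pw ≤ w)
    (hfloor : (e₁ - 1) / p + (e₂ - 1) / p < (e₁ + e₂ - 1) / p) :
    ¬ (p : ℤ) ∣ ∑ k ∈ Finset.range (pw - e₁ + 1),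
        (-1 : ℤ) ^ (e₂ - 1 - k) * ((e₂ - 1).choose k : ℤ) := by
  have he₁_ne : e₁ ≠ 0 := by rintro rfl; simp at hfloor
  have he₂_ne : e₂ ≠ 0 := by rintro rfl; simp at hfloor
  have hsum : e₁ + e₂ - 1 = e₁ - 1 + (e₂ - 1) + 1 := by omega
  have hcarry : p ≤ (e₁ - 1) % p + (e₂ - 1) % p := by
    refine Nat.le_mod_add_mod_of_div_add_div_lt_s4 (hsum ▸ hfloor) fun hdvd => h₁₂ ?_
    exact ((Nat.modEq_iff_dvd' (by omega)).2 (hsum ▸ hdvd)).symm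
  have hr₁ := Nat.mod_lt (e₁ - 1) hp.pos
  have hr₂ := Nat.mod_lt (e₂ - 1) hp.pos
  have he₁_div := Nat.div_add_mod (e₁ - 1) p
  have hpw_le : pw ≤ p * ((e₁ - 1) / p) + p := by
    simpa only [mul_add_one] using
      hpw.2.2 (p * ((e₁ - 1) / p + 1)) (dvd_mul_right _ _) (by rw [mul_add_one]; omega)
  obtain ⟨n, hn⟩ := Nat.exists_eq_add_one_of_ne_zero fun h : e₂ - 1 = 0 => by
    rw [h, Nat.zero_mod] at hcarry
    omega
  have hn_mod : n % p + 1 = (e₂ - 1) % p :=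
    hn ▸ Nat.mod_add_one_of_not_dvd fun hdvd => by
      rw [← hn, Nat.dvd_iff_mod_eq_zero] at hdvd
      omega
  rw [hn, Int.sum_range_neg_one_pow_sub_mul_choose, (isUnit_one.neg.pow _).dvd_mul_left,
    Int.natCast_dvd_natCast]
  exact hp.not_dvd_choose_of_lt_of_le_mod (by omega) (by omega)

/-- With `p` an odd prime, `e₁ ≥ e₂ ≥ 2` with `e₁, e₂, e₁+e₂ ≢ 1 (mod p)`, and `pw` the
smallest multiple of `p` at least `e₁`: if `⌊(e₁+e₂−1)/p⌋ > ⌊(e₁−1)/p⌋ + ⌊(e₂−1)/p⌋`, then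
`p` does not divide `Z := ∑_{k=0}^{pw−e₁} (−1)^{e₂−1−k} C(e₂−1, k)`. -/
theorem stmt4 (p e₁ e₂ pw : ℕ) (hp : p.Prime) (hodd : Odd p)
    (he₂ : 2 ≤ e₂) (hle : e₂ ≤ e₁)
    (h₁ : ¬ e₁ ≡ 1 [MOD p]) (h₂ : ¬ e₂ ≡ 1 [MOD p]) (h₁₂ : ¬ e₁ + e₂ ≡ 1 [MOD p])
    (hpw : p ∣ pw ∧ e₁ ≤ pw ∧ ∀ w : ℕ, p ∣ w → e₁ ≤ w → pw ≤ w)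
    (hfloor : (e₁ - 1) / p + (e₂ - 1) / p < (e₁ + e₂ - 1) / p) :
    ¬ (p : ℤ) ∣ ∑ k ∈ Finset.range (pw - e₁ + 1),
        (-1 : ℤ) ^ (e₂ - 1 - k) * ((e₂ - 1).choose k : ℤ) :=
  stmt4_general p e₁ e₂ pw hp h₁₂ hpw hfloor
end

section
/- Let p be an odd prime and let k be a field of characteristic p. Then the polynomial ∑_{i=0}^{(p−1)/2} C((p−1)/2, i)² · X^{(p−1)/2 − i} in k[X] is separable, i.e., it is coprime to its derivative. -/
/-!
Write `H = ∑ C(m,j)² X^j`, so that the polynomial of the statement is `H` with `m = (p-1)/2`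
(its coefficients are symmetric). `H` is the hypergeometric polynomial `₂F₁(-m,-m;1;X)`, hence a
solution of `X(1-X) H'' + (1 + (2m-1)X) H' - m² H = 0`. Differentiating this equation keeps its
shape, so at a common root `x ∉ {0,1}` of `H` and `H'` all derivatives of `H` vanish; since
`deg H ≤ m < p`, Taylor expansion at `x` forces `H = 0`. Finally `x = 0` and `x = 1` are not roots:
`H(0) = 1` and `H(1) = C(2m,m)`, which is prime to `p` because `2m < p`.
-/

open Polynomial Finset
open scoped Nat

section SecondOrderODE

variable {R : Type*} [CommRing R] {a b c f : R[X]}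

theorem exists_ode_iterate_derivative (ha : a.natDegree ≤ 2) (hb : b.natDegree ≤ 1)
    (hc : c.natDegree = 0) (hf : a * derivative (derivative f) + b * derivative f + c * f = 0)
    (n : ℕ) :
    ∃ b' c' : R[X], b'.natDegree ≤ 1 ∧ c'.natDegree = 0 ∧
      a * derivative^[n + 2] f + b' * derivative^[n + 1] f + c' * derivative^[n] f = 0 := by
  induction n with
  | zero => exact ⟨b, c, hb, hc, hf⟩
  | succ n ih =>
    obtain ⟨b', c', hb', hc', h⟩ := ih
    refine ⟨derivative a + b', derivative b' + c', ?_, ?_, ?_⟩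
    · exact (natDegree_add_le _ _).trans
        (max_le ((natDegree_derivative_le a).trans (by omega)) hb')
    · exact Nat.le_zero.mp <| (natDegree_add_le _ _).trans
        (max_le ((natDegree_derivative_le b').trans (by omega)) hc'.le)
    · have h' := congrArg derivative h
      simp only [derivative_add, derivative_mul, derivative_of_natDegree_zero hc', zero_mul,
        zero_add, derivative_zero, ← Function.iterate_succ_apply' derivative] at h'
      linear_combination h'

theorem isRoot_iterate_derivative_of_ode [NoZeroDivisors R] (ha : a.natDegree ≤ 2)
    (hb : b.natDegree ≤ 1) (hc : c.natDegree = 0)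
    (hf : a * derivative (derivative f) + b * derivative f + c * f = 0) {x : R}
    (hax : ¬ a.IsRoot x) (h0 : f.IsRoot x) (h1 : (derivative f).IsRoot x) (n : ℕ) :
    (derivative^[n] f).IsRoot x := by
  induction n using Nat.twoStepInduction with
  | zero => exact h0
  | one => exact h1
  | more n ih ih' =>
    obtain ⟨b', c', -, -, h⟩ := exists_ode_iterate_derivative ha hb hc hf n
    have hx := congrArg (eval x) h
    simp only [eval_add, eval_mul, ih.eq_zero, ih'.eq_zero, mul_zero, add_zero, eval_zero] at hx
    exact (mul_eq_zero.mp hx).resolve_left hax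

end SecondOrderODE

theorem Polynomial.eq_zero_of_forall_isRoot_iterate_derivative {R : Type*} [CommRing R]
    [IsDomain R] {f : R[X]} {x : R} (hfac : (f.natDegree ! : R) ≠ 0)
    (h : ∀ n, (derivative^[n] f).IsRoot x) : f = 0 := by
  classical
  by_contra hf
  have hlt := lt_rootMultiplicity_of_isRoot_iterate_derivative_of_mem_nonZeroDivisors hf
    (fun n _ ↦ h n) (mem_nonZeroDivisors_of_ne_zero hfac)
  rw [← count_roots] at hlt
  exact (hlt.trans_le ((Multiset.count_le_card _ _).trans (card_roots' f))).false

theorem Polynomial.separable_of_forall_isRoot_not_isRoot_derivative {K : Type*} [Field K]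
    [IsAlgClosed K] {f : K[X]} (hf : f ≠ 0) (h : ∀ x, f.IsRoot x → ¬ (derivative f).IsRoot x) :
    f.Separable := by
  classical
  rw [← nodup_roots_iff_of_splits hf (IsAlgClosed.splits f), Multiset.nodup_iff_count_le_one]
  intro x
  rw [count_roots, ← not_lt, one_lt_rootMultiplicity_iff_isRoot hf]
  exact fun ⟨h0, h1⟩ ↦ h x h0 h1

/-- Up to sign, the Hasse invariant of the Legendre curve `y² = x(x-1)(x-λ)` in characteristic
`2m+1`. -/
noncomputable def hassePoly (R : Type*) [CommRing R] (m : ℕ) : R[X] :=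
  ∑ j ∈ range (m + 1), C ((m.choose j : R) ^ 2) * X ^ j

section hassePoly

variable {R : Type*} [CommRing R] (m : ℕ)

theorem coeff_hassePoly (n : ℕ) : (hassePoly R m).coeff n = (m.choose n : R) ^ 2 := by
  rw [hassePoly, finsetSum_coeff]
  simp only [coeff_C_mul, coeff_X_pow, mul_ite, mul_one, mul_zero, sum_ite_eq, mem_range]
  split_ifs with h
  · rfl
  · rw [Nat.choose_eq_zero_of_lt (by omega), Nat.cast_zero, zero_pow two_ne_zero]

theorem natDegree_hassePoly_le : (hassePoly R m).natDegree ≤ m := by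
  rw [natDegree_le_iff_coeff_eq_zero]
  intro n hn
  rw [coeff_hassePoly, Nat.choose_eq_zero_of_lt (mod_cast hn), Nat.cast_zero, zero_pow two_ne_zero]

theorem hassePoly_ne_zero [Nontrivial R] : hassePoly R m ≠ 0 := fun h ↦ by
  simpa [coeff_hassePoly] using congrArg (coeff · 0) h

theorem eval_zero_hassePoly : (hassePoly R m).eval 0 = 1 := by
  rw [← coeff_zero_eq_eval_zero, coeff_hassePoly, Nat.choose_zero_right, Nat.cast_one, one_pow]

theorem eval_one_hassePoly : (hassePoly R m).eval 1 = (2 * m).choose m := by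
  simp [hassePoly, eval_finsetSum, ← Nat.sum_range_choose_sq]

theorem map_hassePoly {S : Type*} [CommRing S] (f : R →+* S) :
    (hassePoly R m).map f = hassePoly S m := by
  simp [hassePoly, Polynomial.map_sum]

theorem hassePoly_eq_sum_X_pow_sub :
    hassePoly R m = ∑ i ∈ range (m + 1), C ((m.choose i : R) ^ 2) * X ^ (m - i) := by
  rw [hassePoly, ← sum_range_reflect]
  refine sum_congr rfl fun i hi ↦ ?_
  rw [mem_range, Nat.lt_succ_iff] at hi
  rw [add_tsub_cancel_right, Nat.choose_symm hi]

theorem hassePoly_ode :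
    X * (1 - X) * derivative (derivative (hassePoly R m))
      + (1 + C (2 * m - 1 : R) * X) * derivative (hassePoly R m)
      + C (-(m : R) ^ 2) * hassePoly R m = 0 := by
  -- coefficientwise, the equation reads `(n + 1)² h (n + 1) = (m - n)² h n`
  have key : ∀ n : ℕ,
      ((m.choose (n + 1) : R) * (n + 1)) ^ 2 = (m.choose n : R) ^ 2 * (m - n) ^ 2 := by
    intro n
    rcases le_or_gt n m with h | h
    · have h' : ((m.choose (n + 1) * (n + 1) : ℕ) : R) = ((m.choose n * (m - n) : ℕ) : R) :=
        congrArg _ (Nat.choose_succ_right_eq m n)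
      push_cast [Nat.cast_sub h] at h'
      rw [h', mul_pow]
    · simp [Nat.choose_eq_zero_of_lt h, Nat.choose_eq_zero_of_lt (Nat.lt_succ_of_lt h)]
  ext n
  rcases n with _ | _ | n <;>
    simp only [mul_sub, sub_mul, mul_one, add_mul, one_mul, mul_assoc, coeff_add, coeff_sub,
      coeff_X_mul, coeff_X_mul_zero, coeff_C_mul, coeff_derivative, coeff_hassePoly, coeff_zero] <;>
    push_cast
  · linear_combination key 0
  · linear_combination key 1
  · linear_combination (norm := (push_cast; ring)) key (n + 2)

end hassePoly

theorem not_isRoot_derivative_hassePoly {K : Type*} [Field K] {m : ℕ} (hm : ((2 * m)! : K) ≠ 0)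
    {x : K} (h0 : (hassePoly K m).IsRoot x) : ¬ (derivative (hassePoly K m)).IsRoot x := by
  intro h1
  rcases eq_or_ne x 0 with rfl | hx0
  · exact one_ne_zero ((eval_zero_hassePoly m).symm.trans h0)
  rcases eq_or_ne x 1 with rfl | hx1
  · have hdvd : (2 * m).choose m ∣ (2 * m)! := ⟨m ! * m !, by
      rw [← mul_assoc, ← Nat.choose_mul_factorial_mul_factorial (by omega : m ≤ 2 * m),
        show 2 * m - m = m by omega]⟩
    exact ne_zero_of_dvd_ne_zero hm (Nat.cast_dvd_cast hdvd) ((eval_one_hassePoly m).symm.trans h0)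
  have hfac : ((hassePoly K m).natDegree ! : K) ≠ 0 := ne_zero_of_dvd_ne_zero hm <|
    Nat.cast_dvd_cast (Nat.factorial_dvd_factorial ((natDegree_hassePoly_le m).trans (by omega)))
  refine hassePoly_ne_zero m (eq_zero_of_forall_isRoot_iterate_derivative hfac
    (isRoot_iterate_derivative_of_ode ?_ ?_ ?_ (hassePoly_ode m) ?_ h0 h1))
  · compute_degree
  · compute_degree
  · exact natDegree_C _
  · simp [sub_eq_zero, hx0, hx1.symm]

theorem separable_hassePoly {K : Type*} [Field K] {m : ℕ} (hm : ((2 * m)! : K) ≠ 0) :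
    (hassePoly K m).Separable := by
  set L := AlgebraicClosure K
  have hmL : ((2 * m)! : L) ≠ 0 := by
    rwa [← map_natCast (algebraMap K L), _root_.map_ne_zero]
  rw [← separable_map (algebraMap K L), map_hassePoly]
  exact separable_of_forall_isRoot_not_isRoot_derivative (hassePoly_ne_zero m)
    fun _ ↦ not_isRoot_derivative_hassePoly hmL

theorem stmt7_general (p : ℕ) (hp : p.Prime) (k : Type*) [Field k] [CharP k p] :
    (∑ i ∈ Finset.range ((p - 1) / 2 + 1),
        Polynomial.C ((((p - 1) / 2).choose i : k) ^ 2) *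
          Polynomial.X ^ ((p - 1) / 2 - i)).Separable := by
  rw [← hassePoly_eq_sum_X_pow_sub]
  refine separable_hassePoly ?_
  rw [Ne, CharP.cast_eq_zero_iff k p, hp.dvd_factorial]
  have := hp.pos
  omega

/-- Let `p` be an odd prime and `k` a field of characteristic `p`.  Then the polynomial
`∑_{i=0}^{(p−1)/2} C((p−1)/2, i)² X^{(p−1)/2−i}` in `k[X]` is separable. -/
theorem stmt7 (p : ℕ) (hp : p.Prime) (hodd : Odd p) (k : Type*) [Field k] [CharP k p] :
    (∑ i ∈ Finset.range ((p - 1) / 2 + 1),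
        Polynomial.C ((((p - 1) / 2).choose i : k) ^ 2) *
          Polynomial.X ^ ((p - 1) / 2 - i)).Separable :=
  stmt7_general p hp k
end

section
/- Let p = 2 or p = 3 and let d be a positive integer. Then any two elements of Ω_d are related by the equivalence relation generated by the refinement relation; that is, for all E, E' in Ω_d there is a finite chain E = E₀, E₁, …, E_n = E' of elements of Ω_d such that for each i, either E_{i+1} is a refinement of E_i or E_i is a refinement of E_{i+1}. -/
/-- `Omega p d` is the set of multisets of integers summing to `d + 2` all of whose entries
`e` satisfy `e ≥ 2` and `e ≢ 1 (mod p)`. -/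
def Omega (p d : ℕ) : Set (Multiset ℕ) :=
  {E | E.sum = d + 2 ∧ ∀ e ∈ E, 2 ≤ e ∧ ¬ e ≡ 1 [MOD p]}

/-- `Refines E E'` means `E'` is a refinement of `E`: there is a multiset `g` of multisets
whose member-sums form `E` and whose multiset union (join) is `E'`. -/
def Refines (E E' : Multiset ℕ) : Prop :=
  ∃ g : Multiset (Multiset ℕ), g.map Multiset.sum = E ∧ g.sum = E'

/-!
If `d + 2 ≢ 1 (mod p)`, the one-part multiset `{d + 2}` lies in `Ω_d` and coarsens every element,
so any two elements are connected through it. Otherwise `p = 3`, since for `p = 2` all parts are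
even and `Ω_d` is empty. Parts are then `≡ 0` or `≡ 2 (mod 3)` and sum to `1 (mod 3)`, so some part
`e` is `≡ 2`; coarsening to `{e, d + 2 - e}` and, when `e > 2`, passing through
`{2, e - 2, d + 2 - e}`, a common refinement of `{e, d + 2 - e}` and `{2, d}`, connects every
element to `{2, d}`.
-/

open Relation

namespace Refines

theorem singleton_sum (E : Multiset ℕ) : Refines {E.sum} E :=
  ⟨{E}, by simp, by simp⟩

theorem cons (a : ℕ) {A B : Multiset ℕ} (h : Refines A B) : Refines (a ::ₘ A) (a ::ₘ B) := by
  obtain ⟨g, rfl, rfl⟩ := h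
  exact ⟨{a} ::ₘ g, by simp, by simp⟩

theorem pair_triple_left (a b c : ℕ) : Refines {a + b, c} {a, b, c} :=
  ⟨{{a, b}, {c}}, by simp, by simp⟩

theorem pair_triple_right (a b c : ℕ) : Refines {a, b + c} {a, b, c} := by
  simpa using cons a (singleton_sum {b, c})

end Refines

def RefineLink (S : Set (Multiset ℕ)) (A B : Multiset ℕ) : Prop :=
  A ∈ S ∧ B ∈ S ∧ (Refines A B ∨ Refines B A)

instance (S : Set (Multiset ℕ)) : Std.Symm (RefineLink S) :=
  ⟨fun _ _ ⟨hA, hB, h⟩ => ⟨hB, hA, h.symm⟩⟩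

theorem singleton_mem_Omega {p d : ℕ} (h : ¬ d + 2 ≡ 1 [MOD p]) : {d + 2} ∈ Omega p d :=
  ⟨Multiset.sum_singleton _, by simpa using h⟩

theorem reflTransGen_singleton_of_mem_Omega {p d : ℕ} {E : Multiset ℕ} (hE : E ∈ Omega p d)
    (h : ¬ d + 2 ≡ 1 [MOD p]) : ReflTransGen (RefineLink (Omega p d)) E {d + 2} :=
  .single ⟨hE, singleton_mem_Omega h, .inr (hE.1 ▸ .singleton_sum E)⟩

theorem two_dvd_of_mem_Omega_two {d : ℕ} {E : Multiset ℕ} (hE : E ∈ Omega 2 d) : 2 ∣ d + 2 :=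
  hE.1 ▸ Multiset.dvd_sum fun e he =>
    Nat.dvd_of_mod_eq_zero (by have := (hE.2 e he).2; unfold Nat.ModEq at this; omega)

theorem mem_Omega_three {d : ℕ} {E : Multiset ℕ} :
    E ∈ Omega 3 d ↔ E.sum = d + 2 ∧ ∀ e ∈ E, 2 ≤ e ∧ e % 3 ≠ 1 := by
  simp [Omega, Nat.ModEq]

theorem exists_mem_mod_three_eq_two {d : ℕ} {E : Multiset ℕ} (hE : E ∈ Omega 3 d)
    (hd : (d + 2) % 3 = 1) : ∃ e ∈ E, e % 3 = 2 := by
  by_contra! h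
  have h3 : 3 ∣ E.sum := Multiset.dvd_sum fun e he =>
    Nat.dvd_of_mod_eq_zero (by have := (mem_Omega_three.1 hE).2 e he; have := h e he; omega)
  rw [hE.1] at h3
  omega

theorem reflTransGen_two_of_mem_Omega_three {d : ℕ} {E : Multiset ℕ} (hE : E ∈ Omega 3 d)
    (hd : (d + 2) % 3 = 1) : ReflTransGen (RefineLink (Omega 3 d)) E {2, d} := by
  obtain ⟨e, he, he2⟩ := exists_mem_mod_three_eq_two hE hd
  obtain ⟨F, rfl⟩ := Multiset.exists_cons_of_mem he
  have hsum : e + F.sum = d + 2 := by simpa using hE.1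
  have hF : F.sum = d + 2 - e := by omega
  have hpair : {e, d + 2 - e} ∈ Omega 3 d := by simp [mem_Omega_three]; omega
  refine .head ⟨hE, hpair, .inr (hF ▸ (Refines.singleton_sum F).cons e)⟩ ?_
  obtain rfl | he5 : e = 2 ∨ 5 ≤ e := by omega
  · rw [Nat.add_sub_cancel]
  have htriple : {2, e - 2, d + 2 - e} ∈ Omega 3 d := by simp [mem_Omega_three]; omega
  have h2d : {2, d} ∈ Omega 3 d := by simp [mem_Omega_three]; omega
  refine .head ⟨hpair, htriple, .inl ?_⟩ (.single ⟨htriple, h2d, .inr ?_⟩)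
  · simpa [show 2 + (e - 2) = e by omega] using Refines.pair_triple_left 2 (e - 2) (d + 2 - e)
  · simpa [show e - 2 + (d + 2 - e) = d by omega] using
      Refines.pair_triple_right 2 (e - 2) (d + 2 - e)

theorem stmt12_general (p d : ℕ) (hp : p = 2 ∨ p = 3)
    (E E' : Multiset ℕ) (hE : E ∈ Omega p d) (hE' : E' ∈ Omega p d) :
    Relation.ReflTransGen
      (fun A B => A ∈ Omega p d ∧ B ∈ Omega p d ∧ (Refines A B ∨ Refines B A)) E E' := by
  change ReflTransGen (RefineLink (Omega p d)) E E'
  suffices ∃ C, ReflTransGen (RefineLink (Omega p d)) E C ∧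
      ReflTransGen (RefineLink (Omega p d)) E' C by
    obtain ⟨C, hC, hC'⟩ := this
    exact hC.trans (symm hC')
  by_cases hd : d + 2 ≡ 1 [MOD p]
  · unfold Nat.ModEq at hd
    rcases hp with rfl | rfl
    · exact absurd (two_dvd_of_mem_Omega_two hE) (by omega)
    · exact ⟨{2, d}, reflTransGen_two_of_mem_Omega_three hE hd,
        reflTransGen_two_of_mem_Omega_three hE' hd⟩
  · exact ⟨{d + 2}, reflTransGen_singleton_of_mem_Omega hE hd,
      reflTransGen_singleton_of_mem_Omega hE' hd⟩

/-- For `p = 2` or `p = 3` and `d ≥ 1`, any two elements of `Ω_d` are related by the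
equivalence relation generated by refinement: there is a finite chain of elements of `Ω_d`
in which consecutive members are related by refinement in one direction or the other. -/
theorem stmt12 (p d : ℕ) (hp : p = 2 ∨ p = 3) (hd : 0 < d)
    (E E' : Multiset ℕ) (hE : E ∈ Omega p d) (hE' : E' ∈ Omega p d) :
    Relation.ReflTransGen
      (fun A B => A ∈ Omega p d ∧ B ∈ Omega p d ∧ (Refines A B ∨ Refines B A)) E E' :=
  stmt12_general p d hp E E' hE hE'
end

section
/- Let p = 5 and let d ≥ 7 be an integer. Then any two elements of Ω_d are joined by a finite chain E = E₀, E₁, …, E_n = E' of elements of Ω_d in which, for each i, either E_{i+1} is obtained from E_i by an elementary move or E_i is obtained from E_{i+1} by an elementary move. -/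
/-- `ElemMove p E F` means `F` is obtained from `E` by replacing one entry `e` by parts
`f₁, …, f_m` summing to `e`, each `≥ 2` and `≢ 1 (mod p)`, according to one of the
elementary moves (a)–(e). -/
def ElemMove (p : ℕ) (E F : Multiset ℕ) : Prop :=
  ∃ e ∈ E, ∃ parts : Multiset ℕ,
    F = E.erase e + parts ∧ parts.sum = e ∧
    (∀ f ∈ parts, 2 ≤ f ∧ ¬ f ≡ 1 [MOD p]) ∧
    ((∃ f₁ f₂ : ℕ, parts = {f₁, f₂} ∧
        (f₁ - 1) / p + (f₂ - 1) / p < (e - 1) / p) ∨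
      (Multiset.card parts = 3 ∧ ∀ f ∈ parts, f ≡ (p + 1) / 2 [MOD p]) ∨
      (Multiset.card parts = 3 ∧ (p - 1) ∈ parts) ∨
      (∃ n : ℕ, 1 ≤ n ∧ n ≤ p - 1 ∧ ¬ p ∣ n * ((n + 1) * p - n ^ 2) ∧
        e = (n + 1) * (p - n + 1) ∧ parts = Multiset.replicate (p - n + 1) (n + 1)) ∨
      (p = 5 ∧ ((e = 9 ∧ parts = {3, 2, 2, 2}) ∨ (e = 10 ∧ parts = {3, 3, 2, 2}))))

/-!
Every admissible multiset of sum at least `9` is joined to the unique multiset of that sum made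
of twos and at most one three, by a descent on the sum of the squares of the entries. An entry
`e > 5` is at least `7` (as `6 ≡ 1`) and is split as `{5, e - 5}`. A multiset with entries in
`{2, 3, 4, 5}` of sum at least `9` that is not yet of the final shape contains one of ten small
configurations `A`, each joined to a configuration `B` of the same sum and smaller sum of squares,
mostly through a single entry `A.sum` that splits both into `A` and into `B`.
-/

open Multiset

def Admissible (p : ℕ) (E : Multiset ℕ) : Prop :=
  ∀ e ∈ E, 2 ≤ e ∧ ¬ e ≡ 1 [MOD p]

instance (p : ℕ) : DecidablePred (Admissible p) :=
  fun _ => inferInstanceAs (Decidable (∀ _ ∈ _, _))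

def Adjacent (p : ℕ) (A B : Multiset ℕ) : Prop :=
  Admissible p A ∧ Admissible p B ∧ (ElemMove p A B ∨ ElemMove p B A)

def Linked (p : ℕ) : Multiset ℕ → Multiset ℕ → Prop :=
  Relation.ReflTransGen (Adjacent p)

section General

variable {p : ℕ} {A B C E F : Multiset ℕ}

theorem Admissible.add (hA : Admissible p A) (hB : Admissible p B) : Admissible p (A + B) :=
  fun e he => (mem_add.1 he).elim (hA e) (hB e)

theorem ElemMove.sum_eq (h : ElemMove p E F) : F.sum = E.sum := by
  obtain ⟨e, he, parts, rfl, hsum, -⟩ := h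
  rw [sum_add, hsum, add_comm, ← sum_cons, cons_erase he]

theorem ElemMove.admissible (h : ElemMove p E F) (hE : Admissible p E) : Admissible p F := by
  obtain ⟨e, -, parts, rfl, -, hparts, -⟩ := h
  exact Admissible.add (fun f hf => hE f (mem_of_mem_erase hf)) hparts

theorem ElemMove.add_left (h : ElemMove p E F) (C : Multiset ℕ) :
    ElemMove p (C + E) (C + F) := by
  obtain ⟨e, he, parts, rfl, hrest⟩ := h
  refine ⟨e, mem_add.2 (Or.inr he), parts, ?_, hrest⟩
  rw [erase_add_right_pos C he, add_assoc]

theorem ElemMove.singleton_pair {e f₁ f₂ : ℕ} (hsum : f₁ + f₂ = e) (hadm : Admissible p {f₁, f₂})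
    (hlt : (f₁ - 1) / p + (f₂ - 1) / p < (e - 1) / p) : ElemMove p {e} {f₁, f₂} :=
  ⟨e, mem_singleton_self e, _, by simp, by simpa using hsum, hadm, Or.inl ⟨f₁, f₂, rfl, hlt⟩⟩

theorem ElemMove.singleton_triple_of_mem {e : ℕ} {parts : Multiset ℕ} (hsum : parts.sum = e)
    (hadm : Admissible p parts) (hcard : card parts = 3) (hmem : p - 1 ∈ parts) :
    ElemMove p {e} parts :=
  ⟨e, mem_singleton_self e, _, by simp, hsum, hadm, Or.inr (Or.inr (Or.inl ⟨hcard, hmem⟩))⟩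

theorem Adjacent.symm (h : Adjacent p A B) : Adjacent p B A :=
  ⟨h.2.1, h.1, h.2.2.symm⟩

theorem Adjacent.sum_eq (h : Adjacent p A B) : A.sum = B.sum :=
  h.2.2.elim (fun h => h.sum_eq.symm) ElemMove.sum_eq

theorem Adjacent.add_left (h : Adjacent p A B) (hC : Admissible p C) :
    Adjacent p (C + A) (C + B) :=
  ⟨hC.add h.1, hC.add h.2.1, h.2.2.imp (·.add_left C) (·.add_left C)⟩

theorem Linked.single_of_elemMove (hA : Admissible p A) (h : ElemMove p A B) : Linked p A B :=
  .single ⟨hA, h.admissible hA, Or.inl h⟩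

theorem Linked.symm (h : Linked p A B) : Linked p B A := by
  induction h with
  | refl => exact .refl
  | tail _ hs ih => exact ih.head hs.symm

theorem Linked.sum_eq (h : Linked p A B) : A.sum = B.sum := by
  induction h with
  | refl => rfl
  | tail _ hs ih => exact ih.trans hs.sum_eq

theorem Linked.admissible (hA : Admissible p A) (h : Linked p A B) : Admissible p B := by
  induction h with
  | refl => exact hA
  | tail _ hs _ => exact hs.2.1

theorem Linked.add_left (h : Linked p A B) (hC : Admissible p C) :
    Linked p (C + A) (C + B) :=
  Relation.ReflTransGen.lift (C + ·) (fun _ _ hs => Adjacent.add_left hs hC) _ _ h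

theorem linked_of_split {e : ℕ} (he : Admissible p {e}) (hA : ElemMove p {e} A)
    (hB : ElemMove p {e} B) : Linked p A B :=
  (Linked.single_of_elemMove he hA).symm.trans (Linked.single_of_elemMove he hB)

theorem Linked.reflTransGen_omega {d : ℕ} (h : Linked p E F) (hE : E.sum = d + 2) :
    Relation.ReflTransGen
      (fun A B => A ∈ Omega p d ∧ B ∈ Omega p d ∧ (ElemMove p A B ∨ ElemMove p B A)) E F := by
  induction h with
  | refl => exact .refl
  | @tail B C hEB hBC ih =>
    have hB : B.sum = d + 2 := Linked.sum_eq hEB ▸ hE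
    exact ih.tail ⟨⟨hB, hBC.1⟩, ⟨hBC.sum_eq ▸ hB, hBC.2.1⟩, hBC.2.2⟩

end General

def sumSq (E : Multiset ℕ) : ℕ :=
  (E.map (· ^ 2)).sum

theorem sumSq_add (A B : Multiset ℕ) : sumSq (A + B) = sumSq A + sumSq B := by
  simp [sumSq]

def ofCounts (a b c d : ℕ) : Multiset ℕ :=
  replicate a 2 + replicate b 3 + replicate c 4 + replicate d 5

theorem ofCounts_add (a b c d a' b' c' d' : ℕ) :
    ofCounts a b c d + ofCounts a' b' c' d' = ofCounts (a + a') (b + b') (c + c') (d + d') := by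
  simp only [ofCounts, replicate_add]
  abel

theorem sum_ofCounts (a b c d : ℕ) : (ofCounts a b c d).sum = 2 * a + 3 * b + 4 * c + 5 * d := by
  simp [ofCounts, sum_replicate]
  ring

theorem admissible_ofCounts (a b c d : ℕ) : Admissible 5 (ofCounts a b c d) := by
  intro e he
  simp only [ofCounts, mem_add, mem_replicate] at he
  rcases he with ((⟨-, rfl⟩ | ⟨-, rfl⟩) | ⟨-, rfl⟩) | ⟨-, rfl⟩ <;> decide

theorem exists_eq_ofCounts {E : Multiset ℕ} (hE : ∀ e ∈ E, 2 ≤ e ∧ e ≤ 5) :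
    ∃ a b c d, E = ofCounts a b c d := by
  induction E using Multiset.induction_on with
  | empty => exact ⟨0, 0, 0, 0, rfl⟩
  | cons e E ih =>
    obtain ⟨a, b, c, d, rfl⟩ := ih fun f hf => hE f (mem_cons_of_mem hf)
    obtain ⟨he₂, he₅⟩ := hE e (mem_cons_self e _)
    rw [← singleton_add]
    interval_cases e
    · exact ⟨a + 1, b, c, d, by rw [add_comm]; exact ofCounts_add a b c d 1 0 0 0⟩
    · exact ⟨a, b + 1, c, d, by rw [add_comm]; exact ofCounts_add a b c d 0 1 0 0⟩
    · exact ⟨a, b, c + 1, d, by rw [add_comm]; exact ofCounts_add a b c d 0 0 1 0⟩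
    · exact ⟨a, b, c, d + 1, by rw [add_comm]; exact ofCounts_add a b c d 0 0 0 1⟩

theorem elemMove_nine_three_three_three : ElemMove 5 {9} {3, 3, 3} :=
  ⟨9, mem_singleton_self 9, {3, 3, 3}, by simp, rfl, by decide, Or.inr (Or.inl (by decide))⟩

theorem elemMove_nine_three_two_two_two : ElemMove 5 {9} {3, 2, 2, 2} :=
  ⟨9, mem_singleton_self 9, _, by simp, rfl, by decide, Or.inr (Or.inr (Or.inr (Or.inr
    ⟨rfl, Or.inl ⟨rfl, rfl⟩⟩)))⟩

theorem elemMove_ten_three_three_two_two : ElemMove 5 {10} {3, 3, 2, 2} :=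
  ⟨10, mem_singleton_self 10, _, by simp, rfl, by decide, Or.inr (Or.inr (Or.inr (Or.inr
    ⟨rfl, Or.inr ⟨rfl, rfl⟩⟩)))⟩

theorem elemMove_ten_two_two_two_two_two : ElemMove 5 {10} {2, 2, 2, 2, 2} :=
  ⟨10, mem_singleton_self 10, _, by simp, rfl, by decide, Or.inr (Or.inr (Or.inr (Or.inl
    ⟨1, le_rfl, by norm_num, by decide, rfl, rfl⟩)))⟩

theorem linked_five_five : Linked 5 {5, 5} {2, 2, 2, 2, 2} :=
  linked_of_split (e := 10) (by decide) (.singleton_pair rfl (by decide) (by norm_num))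
    elemMove_ten_two_two_two_two_two

theorem linked_two_five : Linked 5 {2, 5} {3, 4} :=
  linked_of_split (e := 7) (by decide) (.singleton_pair rfl (by decide) (by norm_num))
    (.singleton_pair rfl (by decide) (by norm_num))

theorem linked_three_five : Linked 5 {3, 5} {4, 4} :=
  linked_of_split (e := 8) (by decide) (.singleton_pair rfl (by decide) (by norm_num))
    (.singleton_pair rfl (by decide) (by norm_num))

theorem linked_four_five : Linked 5 {4, 5} {3, 3, 3} :=
  linked_of_split (e := 9) (by decide) (.singleton_pair rfl (by decide) (by norm_num))
    elemMove_nine_three_three_three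

theorem linked_four_four : Linked 5 {4, 4} {2, 2, 4} :=
  linked_of_split (e := 8) (by decide) (.singleton_pair rfl (by decide) (by norm_num))
    (.singleton_triple_of_mem rfl (by decide) rfl (by decide))

theorem linked_two_three_four : Linked 5 {2, 3, 4} {3, 3, 3} :=
  linked_of_split (e := 9) (by decide) (.singleton_triple_of_mem rfl (by decide) rfl (by decide))
    elemMove_nine_three_three_three

theorem linked_three_three_four : Linked 5 {3, 3, 4} {3, 3, 2, 2} :=
  linked_of_split (e := 10) (by decide) (.singleton_triple_of_mem rfl (by decide) rfl (by decide))
    elemMove_ten_three_three_two_two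

theorem linked_two_four_four : Linked 5 {2, 4, 4} {3, 3, 2, 2} :=
  linked_of_split (e := 10) (by decide) (.singleton_triple_of_mem rfl (by decide) rfl (by decide))
    elemMove_ten_three_three_two_two

theorem linked_two_two_two_four : Linked 5 {2, 2, 2, 4} {3, 3, 2, 2} :=
  ((linked_four_four.add_left (C := {2}) (by decide)).symm.trans linked_two_four_four :)

theorem linked_three_three_three : Linked 5 {3, 3, 3} {3, 2, 2, 2} :=
  linked_of_split (by decide) elemMove_nine_three_three_three elemMove_nine_three_two_two_two

theorem linked_two_two_three_three : Linked 5 {2, 2, 3, 3} {2, 2, 2, 2, 2} :=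
  (by decide : ({2, 2, 3, 3} : Multiset ℕ) = {3, 3, 2, 2}) ▸
    linked_of_split (by decide) elemMove_ten_three_three_two_two elemMove_ten_two_two_two_two_two

theorem exists_linked_sumSq_lt_of_le {p : ℕ} {A B E : Multiset ℕ} (hAB : Linked p A B)
    (hlt : sumSq B < sumSq A) (hAE : A ≤ E) (hE : Admissible p E) :
    ∃ F, sumSq F < sumSq E ∧ Linked p E F := by
  obtain ⟨C, rfl⟩ := Multiset.le_iff_exists_add.1 hAE
  rw [add_comm] at hE ⊢
  refine ⟨C + B, by simp only [sumSq_add]; omega, hAB.add_left fun c hc => hE c ?_⟩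
  exact mem_add.2 (Or.inl hc)

theorem ofCounts_le_ofCounts {a₀ b₀ c₀ d₀ a b c d : ℕ}
    (h : a₀ ≤ a ∧ b₀ ≤ b ∧ c₀ ≤ c ∧ d₀ ≤ d) : ofCounts a₀ b₀ c₀ d₀ ≤ ofCounts a b c d := by
  obtain ⟨⟨x, rfl⟩, ⟨y, rfl⟩, ⟨z, rfl⟩, ⟨w, rfl⟩⟩ :=
    And.imp Nat.exists_eq_add_of_le (And.imp Nat.exists_eq_add_of_le
      (And.imp Nat.exists_eq_add_of_le Nat.exists_eq_add_of_le)) h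
  rw [← ofCounts_add]
  exact le_add_right le_rfl

theorem exists_linked_sumSq_lt_ofCounts {a b c d : ℕ} (hsum : 9 ≤ 2 * a + 3 * b + 4 * c + 5 * d)
    (hred : ¬ (b ≤ 1 ∧ c = 0 ∧ d = 0)) :
    ∃ F, sumSq F < sumSq (ofCounts a b c d) ∧ Linked 5 (ofCounts a b c d) F := by
  have rule (a₀ b₀ c₀ d₀ : ℕ) {B : Multiset ℕ} (hAB : Linked 5 (ofCounts a₀ b₀ c₀ d₀) B)
      (hlt : sumSq B < sumSq (ofCounts a₀ b₀ c₀ d₀)) (hle : a₀ ≤ a ∧ b₀ ≤ b ∧ c₀ ≤ c ∧ d₀ ≤ d) :=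
    exists_linked_sumSq_lt_of_le hAB hlt (ofCounts_le_ofCounts hle) (admissible_ofCounts a b c d)
  obtain h | h | h | h | h | h | h | h | h | h :
      2 ≤ d ∨ (1 ≤ d ∧ 1 ≤ a) ∨ (1 ≤ d ∧ 1 ≤ b) ∨ (1 ≤ d ∧ 1 ≤ c) ∨ 2 ≤ c ∨
      (1 ≤ c ∧ 1 ≤ b ∧ 1 ≤ a) ∨ (1 ≤ c ∧ 2 ≤ b) ∨ (1 ≤ c ∧ 3 ≤ a) ∨ 3 ≤ b ∨
      (2 ≤ b ∧ 2 ≤ a) := by omega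
  -- The left-hand sides of the rules list their entries in increasing order, which makes them
  -- definitionally equal to the corresponding `ofCounts`.
  · exact rule 0 0 0 2 linked_five_five (by decide) (by omega)
  · exact rule 1 0 0 1 linked_two_five (by decide) (by omega)
  · exact rule 0 1 0 1 linked_three_five (by decide) (by omega)
  · exact rule 0 0 1 1 linked_four_five (by decide) (by omega)
  · exact rule 0 0 2 0 linked_four_four (by decide) (by omega)
  · exact rule 1 1 1 0 linked_two_three_four (by decide) (by omega)
  · exact rule 0 2 1 0 linked_three_three_four (by decide) (by omega)
  · exact rule 3 0 1 0 linked_two_two_two_four (by decide) (by omega)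
  · exact rule 0 3 0 0 linked_three_three_three (by decide) (by omega)
  · exact rule 2 2 0 0 linked_two_two_three_three (by decide) (by omega)

theorem linked_singleton_five_sub {e : ℕ} (he : Admissible 5 {e}) (h5 : 5 < e) :
    Linked 5 {e} {5, e - 5} := by
  have he₁ : e % 5 ≠ 1 := (he e (mem_singleton_self e)).2
  refine .single_of_elemMove he (.singleton_pair (by omega) ?_ (by omega))
  simp only [Admissible, insert_eq_cons, mem_cons, mem_singleton, forall_eq_or_imp, forall_eq,
    Nat.ModEq]
  omega

theorem exists_linked_sumSq_lt {E : Multiset ℕ} (hE : Admissible 5 E) (hsum : 9 ≤ E.sum) :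
    (∃ a b, b ≤ 1 ∧ E = ofCounts a b 0 0) ∨ ∃ F, sumSq F < sumSq E ∧ Linked 5 E F := by
  by_cases hbig : ∃ e ∈ E, 5 < e
  · obtain ⟨e, he, h5⟩ := hbig
    refine .inr (exists_linked_sumSq_lt_of_le
      (linked_singleton_five_sub (fun f hf => hE f (mem_singleton.1 hf ▸ he)) h5) ?_
      (singleton_le.2 he) hE)
    simp only [sumSq, insert_eq_cons, map_cons, map_singleton, sum_cons, sum_singleton]
    zify [h5.le]
    nlinarith
  · push Not at hbig
    obtain ⟨a, b, c, d, rfl⟩ := exists_eq_ofCounts fun e he => ⟨(hE e he).1, hbig e he⟩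
    by_cases hred : b ≤ 1 ∧ c = 0 ∧ d = 0
    · obtain ⟨hb, rfl, rfl⟩ := hred
      exact .inl ⟨a, b, hb, rfl⟩
    · rw [sum_ofCounts] at hsum
      exact .inr (exists_linked_sumSq_lt_ofCounts hsum hred)

theorem exists_linked_ofCounts {E : Multiset ℕ} (hE : Admissible 5 E) (hsum : 9 ≤ E.sum) :
    ∃ a b, b ≤ 1 ∧ Linked 5 E (ofCounts a b 0 0) := by
  induction hn : sumSq E using Nat.strong_induction_on generalizing E with
  | _ n ih =>
    obtain ⟨a, b, hb, rfl⟩ | ⟨F, hlt, hEF⟩ := exists_linked_sumSq_lt hE hsum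
    · exact ⟨a, b, hb, .refl⟩
    · obtain ⟨a, b, hb, hF⟩ :=
        ih _ (hn ▸ hlt) (hEF.admissible hE) (hEF.sum_eq ▸ hsum) rfl
      exact ⟨a, b, hb, hEF.trans hF⟩

theorem ofCounts_eq_of_sum_eq {a b a' b' : ℕ} (hb : b ≤ 1) (hb' : b' ≤ 1)
    (h : (ofCounts a b 0 0).sum = (ofCounts a' b' 0 0).sum) :
    ofCounts a b 0 0 = ofCounts a' b' 0 0 := by
  simp only [sum_ofCounts] at h
  obtain ⟨rfl, rfl⟩ : a = a' ∧ b = b' := by omega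
  rfl

/-- For `p = 5` and `d ≥ 7`, any two elements of `Ω_d` are joined by a finite chain of
elements of `Ω_d` in which consecutive members are related by an elementary move (in one
direction or the other). -/
theorem stmt14 (d : ℕ) (hd : 7 ≤ d)
    (E E' : Multiset ℕ) (hE : E ∈ Omega 5 d) (hE' : E' ∈ Omega 5 d) :
    Relation.ReflTransGen
      (fun A B => A ∈ Omega 5 d ∧ B ∈ Omega 5 d ∧ (ElemMove 5 A B ∨ ElemMove 5 B A))
      E E' := by
  obtain ⟨hEsum, hEadm⟩ := hE
  obtain ⟨hE'sum, hE'adm⟩ := hE'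
  obtain ⟨a, b, hb, hEF⟩ := exists_linked_ofCounts hEadm (by omega)
  obtain ⟨a', b', hb', hEF'⟩ := exists_linked_ofCounts hE'adm (by omega)
  have hF : ofCounts a b 0 0 = ofCounts a' b' 0 0 :=
    ofCounts_eq_of_sum_eq hb hb' (by rw [← hEF.sum_eq, ← hEF'.sum_eq, hEsum, hE'sum])
  exact Linked.reflTransGen_omega (hEF.trans (hF ▸ hEF'.symm)) hEsum
end
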